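/- arXiv:2509.06879 — 2 statements merged into one kernel-verified Lean document; each statement's English description precedes it below -/
import Mathlib

section
/- (Class D + η₊ reduction) Let H be an N×N complex matrix, η a Hermitian unitary (ηᴴ = η, η² = 1) with η Hᴴ η = H, and C a unitary with C Hᵀ Cᴴ = −H, C·C̄ = 1, and C η̄ = η C. Then the matrix ηH is Hermitian and satisfies a class-D particle-hole symmetry with operator ηC: (ηC)(ηH)ᵀ(ηC)ᴴ = −(ηH) and (ηC)·(ηC)‾ = 1, where (ηC)‾ denotes the entrywise conjugate of ηC. -/
/-! Pure algebra from `η² = 1`: conjugating `Hᴴ = ηHη` by `η` gives hermiticity of `ηH`, and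
conjugate-transposing `C η̄ = η C` (note `η̄ᴴ = ηᵀ`) gives `ηᵀ Cᴴ = Cᴴ η`, which moves `ηᵀ`
past `Cᴴ` in `(ηC)(ηH)ᵀ(ηC)ᴴ = η C Hᵀ ηᵀ Cᴴ η` so that the particle-hole relation for `C` applies. -/

open Matrix

theorem isSelfAdjoint_mul_of_star_conj_eq {M : Type*} [Monoid M] [StarMul M] {η H : M}
    (hη : IsSelfAdjoint η) (hη2 : η * η = 1) (hpH : η * star H * η = H) :
    IsSelfAdjoint (η * H) := by
  change star (η * H) = η * H
  calc star (η * H) = (η * η) * star H * η := by rw [star_mul, hη.star_eq, hη2, one_mul]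
    _ = η * (η * star H * η) := by simp only [mul_assoc]
    _ = η * H := by rw [hpH]

theorem mul_mul_mul_eq_one_of_mul_eq_mul {M : Type*} [Monoid M] {η η' C C' : M}
    (hη2 : η * η = 1) (hcomm : C * η' = η * C) (hCC : C * C' = 1) :
    η * C * (η' * C') = 1 := by
  calc η * C * (η' * C') = η * (C * η') * C' := by simp only [mul_assoc]
    _ = (η * η) * (C * C') := by rw [hcomm]; simp only [mul_assoc]
    _ = 1 := by rw [hη2, hCC, one_mul]

namespace Matrix

theorem conjTranspose_map_starRingEnd {m n α : Type*} [CommSemiring α] [StarRing α]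
    (M : Matrix m n α) : (M.map (starRingEnd α))ᴴ = Mᵀ :=
  conjTranspose_conjTranspose Mᵀ

variable {n α : Type*} [Fintype n]

theorem transpose_mul_conjTranspose_of_mul_map_starRingEnd [CommSemiring α] [StarRing α]
    {η C : Matrix n n α} (hcomm : C * η.map (starRingEnd α) = η * C) :
    ηᵀ * Cᴴ = Cᴴ * ηᴴ := by
  simpa only [conjTranspose_mul, conjTranspose_map_starRingEnd] using congrArg conjTranspose hcomm

theorem mul_transpose_mul_conjTranspose_eq_neg [DecidableEq n] [CommRing α] [StarRing α]
    {H η C : Matrix n n α} (hη : ηᴴ = η) (hη2 : η * η = 1) (hPHS : C * Hᵀ * Cᴴ = -H)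
    (hcomm : C * η.map (starRingEnd α) = η * C) :
    (η * C) * (η * H)ᵀ * (η * C)ᴴ = -(η * H) := by
  calc (η * C) * (η * H)ᵀ * (η * C)ᴴ = η * C * Hᵀ * (ηᵀ * Cᴴ) * ηᴴ := by
        rw [transpose_mul, conjTranspose_mul]; simp only [Matrix.mul_assoc]
    _ = η * (C * Hᵀ * Cᴴ) * (ηᴴ * ηᴴ) := by
        rw [transpose_mul_conjTranspose_of_mul_map_starRingEnd hcomm]
        simp only [Matrix.mul_assoc]
    _ = -(η * H) := by rw [hPHS, hη, hη2, Matrix.mul_one, Matrix.mul_neg]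

end Matrix

theorem classD_eta_plus_reduction_general {N : ℕ}
    (H η C : Matrix (Fin N) (Fin N) ℂ)
    (hη : ηᴴ = η) (hη2 : η * η = 1)
    (hpH : η * Hᴴ * η = H)
    (hPHS : C * Hᵀ * Cᴴ = -H)
    (hCC : C * C.map (starRingEnd ℂ) = 1)
    (hcomm : C * η.map (starRingEnd ℂ) = η * C) :
    (η * H)ᴴ = η * H ∧
    (η * C) * (η * H)ᵀ * (η * C)ᴴ = -(η * H) ∧
    (η * C) * (η * C).map (starRingEnd ℂ) = 1 := by
  refine ⟨isSelfAdjoint_mul_of_star_conj_eq hη hη2 hpH,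
    mul_transpose_mul_conjTranspose_eq_neg hη hη2 hPHS hcomm, ?_⟩
  rw [Matrix.map_mul]
  exact mul_mul_mul_eq_one_of_mul_eq_mul hη2 hcomm hCC

/-- Class D + η₊ reduction: `η H` is Hermitian and `η C` implements a class-D
particle-hole symmetry on it. -/
theorem classD_eta_plus_reduction {N : ℕ}
    (H η C : Matrix (Fin N) (Fin N) ℂ)
    (hη : ηᴴ = η) (hη2 : η * η = 1)
    (hpH : η * Hᴴ * η = H)
    (hC : C ∈ Matrix.unitaryGroup (Fin N) ℂ)
    (hPHS : C * Hᵀ * Cᴴ = -H)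
    (hCC : C * C.map (starRingEnd ℂ) = 1)
    (hcomm : C * η.map (starRingEnd ℂ) = η * C) :
    (η * H)ᴴ = η * H ∧
    (η * C) * (η * H)ᵀ * (η * C)ᴴ = -(η * H) ∧
    (η * C) * (η * C).map (starRingEnd ℂ) = 1 :=
  classD_eta_plus_reduction_general H η C hη hη2 hpH hPHS hCC hcomm
end

section
/- (Class D + η₋ reduction) Let H be an N×N complex matrix, η a Hermitian unitary (ηᴴ = η, η² = 1) with η Hᴴ η = H, and C a unitary with C Hᵀ Cᴴ = −H, C·C̄ = 1, and C η̄ = −η C. Then the antiunitary operator built from ηC acts as a time-reversal-type symmetry on the Hermitian matrix ηH: (ηC)(ηH)ᵀ(ηC)ᴴ = ηH and (ηC)·(ηC)‾ = −1 (quaternionic, Kramers-type). -/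
/-!
Conjugate-transposing the anticommutation relation `C η̄ = -η C` gives `ηᵀ Cᴴ = -Cᴴ η`. Moving `η`
through `C` with these two relations turns `(ηC)(ηH)ᵀ(ηC)ᴴ` into `-η (C Hᵀ Cᴴ) η = η H`, and
`(ηC)(ηC)‾ = η C η̄ C̄` into `-η² C C̄ = -1`: the sign of the anticommutation flips the particle-hole
symmetry into a time-reversal symmetry and the real structure `C C̄ = 1` into a quaternionic one.
-/

open Matrix

namespace Matrix

variable {n R : Type*} [Fintype n] [CommRing R] [StarRing R] {η C H : Matrix n n R}

theorem IsHermitian.transpose_mul_conjTranspose_eq_neg (hη : η.IsHermitian)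
    (hanticomm : C * η.map (starRingEnd R) = -(η * C)) : ηᵀ * Cᴴ = -(Cᴴ * η) := by
  have h := congrArg Matrix.conjTranspose hanticomm
  have hconj : (η.map (starRingEnd R))ᴴ = ηᵀ := by ext; simp [starRingEnd_apply]
  rwa [conjTranspose_mul, conjTranspose_neg, conjTranspose_mul, hη.eq, hconj] at h

theorem mul_transpose_mul_conjTranspose_eq_of_anticomm [DecidableEq n] (hη : η.IsHermitian)
    (hη2 : η * η = 1) (hanticomm : C * η.map (starRingEnd R) = -(η * C))
    (hPHS : C * Hᵀ * Cᴴ = -H) :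
    (η * C) * (η * H)ᵀ * (η * C)ᴴ = η * H :=
  calc (η * C) * (η * H)ᵀ * (η * C)ᴴ = η * C * Hᵀ * (ηᵀ * Cᴴ) * η := by
        rw [transpose_mul, conjTranspose_mul, hη.eq]; noncomm_ring
    _ = -(η * (C * Hᵀ * Cᴴ) * (η * η)) := by
        rw [hη.transpose_mul_conjTranspose_eq_neg hanticomm]; noncomm_ring
    _ = η * H := by rw [hPHS, hη2]; noncomm_ring

theorem mul_mul_map_starRingEnd_eq_neg_one_of_anticomm [DecidableEq n] (hη2 : η * η = 1)
    (hCC : C * C.map (starRingEnd R) = 1) (hanticomm : C * η.map (starRingEnd R) = -(η * C)) :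
    (η * C) * (η * C).map (starRingEnd R) = -1 :=
  calc (η * C) * (η * C).map (starRingEnd R)
      = η * (C * η.map (starRingEnd R)) * C.map (starRingEnd R) := by
        rw [Matrix.map_mul]; noncomm_ring
    _ = -((η * η) * (C * C.map (starRingEnd R))) := by rw [hanticomm]; noncomm_ring
    _ = -1 := by rw [hη2, hCC, mul_one]

end Matrix

theorem classD_eta_minus_reduction_general {N : ℕ}
    (H η C : Matrix (Fin N) (Fin N) ℂ)
    (hη : ηᴴ = η) (hη2 : η * η = 1)
    (hPHS : C * Hᵀ * Cᴴ = -H)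
    (hCC : C * C.map (starRingEnd ℂ) = 1)
    (hanticomm : C * η.map (starRingEnd ℂ) = -(η * C)) :
    (η * C) * (η * H)ᵀ * (η * C)ᴴ = η * H ∧
    (η * C) * (η * C).map (starRingEnd ℂ) = -1 :=
  ⟨mul_transpose_mul_conjTranspose_eq_of_anticomm hη hη2 hanticomm hPHS,
    mul_mul_map_starRingEnd_eq_neg_one_of_anticomm hη2 hCC hanticomm⟩

/-- Class D + η₋ reduction: `η C` acts as a Kramers-type (quaternionic)
time-reversal symmetry on the Hermitian matrix `η H`. -/
theorem classD_eta_minus_reduction {N : ℕ}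
    (H η C : Matrix (Fin N) (Fin N) ℂ)
    (hη : ηᴴ = η) (hη2 : η * η = 1)
    (hpH : η * Hᴴ * η = H)
    (hC : C ∈ Matrix.unitaryGroup (Fin N) ℂ)
    (hPHS : C * Hᵀ * Cᴴ = -H)
    (hCC : C * C.map (starRingEnd ℂ) = 1)
    (hanticomm : C * η.map (starRingEnd ℂ) = -(η * C)) :
    (η * C) * (η * H)ᵀ * (η * C)ᴴ = η * H ∧
    (η * C) * (η * C).map (starRingEnd ℂ) = -1 :=
  classD_eta_minus_reduction_general H η C hη hη2 hPHS hCC hanticomm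
end
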